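/- Let d ≥ 1 and θ₀ ∈ (0,1). Let f₀ : ℝ → [0,∞) be Lipschitz with constant L, with f₀(v) = 0 for v ∉ (θ₀,1). Let p : ℝ^d → (0,1) be a C² function satisfying Δp(x) + f₀(p(x)) = 0 for all x ∈ ℝ^d, and let f : ℝ^d × ℝ → [0,∞) be Lipschitz with f(x,v) = f₀(v) whenever v ≥ p(x). Set c := max{2√L, 1}. If u with values in [0,1] is a classical solution of u_t = Δu + f(x,u) on (0,∞) × ℝ^d whose initial datum satisfies u(0,x) ≤ p(x) + e^{−c(x₁−z)/2} for all x ∈ ℝ^d and some z ∈ ℝ, then u(t,x) ≤ p(x) + e^{−c(x₁−z−ct)/2} for all t > 0 and x ∈ ℝ^d. -/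

import Mathlib

open Set Metric Filter MeasureTheory
open scoped ENNReal NNReal Topology

noncomputable section

/-- Euclidean space ℝ^d. -/
abbrev Euc (d : ℕ) := EuclideanSpace ℝ (Fin d)

/-- The Laplacian: sum of second partial derivatives. -/
def lapl (d : ℕ) (g : Euc d → ℝ) (x : Euc d) : ℝ :=
  ∑ i : Fin d,
    fderiv ℝ (fun y => fderiv ℝ g y (EuclideanSpace.single i (1:ℝ))) x
      (EuclideanSpace.single i (1:ℝ))

/-- `u` is a classical solution of `u_t = Δu + f(x,u)` on `(t₀,∞) × ℝ^d`. -/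
def IsSolAfter {d : ℕ} (f : Euc d → ℝ → ℝ) (t₀ : ℝ) (u : ℝ → Euc d → ℝ) : Prop :=
  (∀ t, t₀ < t → ContDiff ℝ 2 (u t)) ∧
  (∀ x t, t₀ < t → HasDerivAt (fun s => u s x) (lapl d (u t) x + f x (u t x)) t)

/-- `u` solves the Cauchy problem with initial datum `u₀` at time `t₀`. -/
def IsSolC {d : ℕ} (f : Euc d → ℝ → ℝ) (t₀ : ℝ) (u₀ : Euc d → ℝ) (u : ℝ → Euc d → ℝ) : Prop :=
  IsSolAfter f t₀ u ∧ (∀ x, u t₀ x = u₀ x) ∧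
  ContinuousOn (fun q : ℝ × Euc d => u q.1 q.2) (Set.Ici t₀ ×ˢ Set.univ)

/-- `u` is an entire classical solution of `u_t = Δu + f(x,u)` on `ℝ × ℝ^d`. -/
def IsSolEntire {d : ℕ} (f : Euc d → ℝ → ℝ) (u : ℝ → Euc d → ℝ) : Prop :=
  (∀ t, ContDiff ℝ 2 (u t)) ∧
  (∀ x t, HasDerivAt (fun s => u s x) (lapl d (u t) x + f x (u t x)) t)

/-- Super-level set Ω_{u,ε}(t). -/
def sLev {d : ℕ} (u : ℝ → Euc d → ℝ) (ε t : ℝ) : Set (Euc d) := {x | ε ≤ u t x}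

/-- `B_r(A)`, the open `r`-neighborhood of a set. -/
def nbhd {d : ℕ} (r : ℝ) (A : Set (Euc d)) : Set (Euc d) := ⋃ y ∈ A, Metric.ball y r

/-- Width `L_{u,ε}(t)` of the transition zone from `ε` to `1-ε`, with `inf ∅ = ∞`. -/
def transWidth {d : ℕ} (u : ℝ → Euc d → ℝ) (ε t : ℝ) : ℝ≥0∞ :=
  sInf {a : ℝ≥0∞ | ∃ L : ℝ, 0 < L ∧ a = ENNReal.ofReal L ∧
    sLev u ε t ⊆ nbhd L (sLev u (1 - ε) t)}

/-- Bounded width for a solution on `(t₀,∞)`. -/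
def BddWidth {d : ℕ} (u : ℝ → Euc d → ℝ) (t₀ : ℝ) : Prop :=
  ∀ ε ∈ Set.Ioo (0:ℝ) (1/2), ∃ T C : ℝ, ∀ t, t₀ + T < t →
    transWidth u ε t ≤ ENNReal.ofReal C

/-- A pure ignition reaction with ignition temperature `θ₀`. -/
def PureIgnitionAt (g : ℝ → ℝ) (θ₀ : ℝ) : Prop :=
  θ₀ ∈ Set.Ioo (0:ℝ) 1 ∧ (∃ L : ℝ≥0, LipschitzOnWith L g (Set.Icc 0 1)) ∧
  (∀ v ∈ Set.Icc (0:ℝ) 1, 0 ≤ g v) ∧ (∀ v ∈ Set.Icc (0:ℝ) θ₀, g v = 0) ∧ g 1 = 0 ∧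
  (∀ v ∈ Set.Ioo θ₀ 1, 0 < g v)

/-- A pure ignition reaction (for some ignition temperature). -/
def PureIgnition (g : ℝ → ℝ) : Prop := ∃ θ', PureIgnitionAt g θ'

/-- `g` admits a traveling front of speed `c` connecting `1` and `0`. -/
def IsTravelingFront (g : ℝ → ℝ) (c : ℝ) : Prop :=
  ∃ U : ℝ → ℝ, (∀ s, U s ∈ Set.Ioo (0:ℝ) 1) ∧ StrictAnti U ∧
    (∀ s, HasDerivAt U (deriv U s) s) ∧
    (∀ s, HasDerivAt (deriv U) (deriv (deriv U) s) s) ∧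
    (∀ s, deriv (deriv U) s + c * deriv U s + g (U s) = 0) ∧
    Filter.Tendsto U Filter.atBot (nhds 1) ∧ Filter.Tendsto U Filter.atTop (nhds 0)

/-- `c` is the front (spreading) speed of `g`. -/
def IsFrontSpeed (g : ℝ → ℝ) (c : ℝ) : Prop := 0 < c ∧ IsTravelingFront g c

/-- Hypothesis (H) of the paper. -/
structure HypH (d : ℕ) (f₀ : ℝ → ℝ) (K : ℝ≥0) (θ₀ θ : ℝ) (f : Euc d → ℝ → ℝ) : Prop where
  K_ge_one : 1 ≤ (K : ℝ)
  f_lip : LipschitzOnWith K (fun q : Euc d × ℝ => f q.1 q.2) (Set.univ ×ˢ Set.Icc 0 1)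
  f_nonneg : ∀ x, ∀ v ∈ Set.Icc (0:ℝ) 1, 0 ≤ f x v
  f_zero : ∀ x, f x 0 = 0
  f_one : ∀ x, f x 1 = 0
  θ₀_mem : θ₀ ∈ Set.Ioo (0:ℝ) 1
  f₀_pure : PureIgnitionAt f₀ θ₀
  f₀_le : ∀ x, ∀ v ∈ Set.Icc (0:ℝ) 1, f₀ v ≤ f x v
  θ_mem : θ ∈ Set.Icc (0:ℝ) (1/3)
  f_ign : ∀ x, ∀ v ∈ Set.Icc (0:ℝ) θ, f x v = 0
  f_mono : ∀ x, AntitoneOn (f x) (Set.Icc (1 - θ) 1)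

/-- `α_f(x;ζ)`, with `inf ∅ = ∞`. -/
def alphaF {d : ℕ} (f : Euc d → ℝ → ℝ) (ζ : ℝ) (x : Euc d) : ℝ≥0∞ :=
  sInf {a : ℝ≥0∞ | ∃ v : ℝ, 0 ≤ v ∧ a = ENNReal.ofReal v ∧ ζ * v < f x v}

/-- The class `F(f₀,K,θ,ζ,η)` of Definition 1.3. -/
def memF (d : ℕ) (f₀ : ℝ → ℝ) (K : ℝ≥0) (θ₀ θ ζ η : ℝ) (f : Euc d → ℝ → ℝ) : Prop :=
  HypH d f₀ K θ₀ θ f ∧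
  ∀ x, ∀ v ∈ Set.Icc (0:ℝ) θ₀, alphaF f ζ x ≤ ENNReal.ofReal v → η ≤ f x v

/-- `R₁` is large enough (for `f₀` and the level `a`) to guarantee spreading. -/
def SpreadingRadius (d : ℕ) (f₀ : ℝ → ℝ) (a R₁ : ℝ) : Prop :=
  ∀ (x₀ : Euc d) (v : ℝ → Euc d → ℝ), (∀ t x, v t x ∈ Set.Icc (0:ℝ) 1) →
    IsSolC (fun _ w => f₀ w) 0 (fun x => if dist x x₀ < R₁ then a else 0) v →
    ∀ ρ > (0:ℝ), ∀ δ > (0:ℝ), ∃ T : ℝ, ∀ t, T ≤ t → ∀ x ∈ Metric.ball x₀ ρ, 1 - δ ≤ v t x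

/-- Spark-like initial data. -/
def SparkLike (d : ℕ) (f₀ : ℝ → ℝ) (θ₀ : ℝ) (u₀ : Euc d → ℝ) : Prop :=
  ∃ (x₀ : Euc d) (R₁ R₂ ε₁ ε₂ : ℝ), 0 < R₁ ∧ R₁ ≤ R₂ ∧ 0 < ε₁ ∧ 0 < ε₂ ∧
    SpreadingRadius d f₀ (θ₀ + ε₁) R₁ ∧
    (∀ x, (if dist x x₀ < R₁ then θ₀ + ε₁ else 0) ≤ u₀ x) ∧
    (∀ x, u₀ x ≤ Real.exp (-ε₂ * (dist x x₀ - R₂)))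

/-- Front-like initial data. -/
def FrontLike (d : ℕ) (θ₀ : ℝ) (u₀ : Euc d → ℝ) : Prop :=
  ∃ (e : Euc d) (R₁ R₂ ε₁ ε₂ : ℝ), ‖e‖ = 1 ∧ R₁ ≤ R₂ ∧ 0 < ε₁ ∧ 0 < ε₂ ∧
    (∀ x, (if (inner ℝ x e : ℝ) < R₁ then θ₀ + ε₁ else 0) ≤ u₀ x) ∧
    (∀ x, u₀ x ≤ Real.exp (-ε₂ * ((inner ℝ x e : ℝ) - R₂)))


lemma aux_second_deriv_nonpos {h h' : ℝ → ℝ} {a q : ℝ}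
    (hd1 : ∀ s, HasDerivAt h (h' s) s) (hd2 : HasDerivAt h' q a)
    (hmax : IsLocalMax h a) : q ≤ 0 := by
  by_contra hq
  push_neg at hq
  have ha0 : h' a = 0 := by
    have := hmax.deriv_eq_zero
    rwa [(hd1 a).deriv] at this
  have hslope : Filter.Tendsto (slope h' a) (nhdsWithin a {a}ᶜ) (nhds q) :=
    (hasDerivAt_iff_tendsto_slope).1 hd2
  have hev : ∀ᶠ s in nhdsWithin a (Set.Ioi a), 0 < h' s := by
    have h1 : ∀ᶠ s in nhdsWithin a {a}ᶜ, 0 < slope h' a s :=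
      hslope.eventually (eventually_gt_nhds hq)
    have h2 : ∀ᶠ s in nhdsWithin a (Set.Ioi a), 0 < slope h' a s :=
      h1.filter_mono (nhdsWithin_mono a (fun s hs => ne_of_gt hs))
    filter_upwards [h2, self_mem_nhdsWithin] with s hs hs'
    rw [slope_def_field, ha0, sub_zero] at hs
    have hpos : 0 < s - a := sub_pos.2 hs'
    have := mul_pos hs hpos
    rwa [div_mul_cancel₀] at this
    exact ne_of_gt hpos
  rw [eventually_nhdsWithin_iff] at hev
  rcases Metric.eventually_nhds_iff.1 hev with ⟨δ, hδ, hball⟩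
  rcases Metric.eventually_nhds_iff.1 hmax with ⟨δ', hδ', hball'⟩
  have hmin : 0 < min δ δ' := lt_min hδ hδ'
  set b := a + min δ δ' / 2 with hb
  have hba : b - a = min δ δ' / 2 := by rw [hb]; ring
  have hab : a < b := by rw [hb]; linarith
  have hmono : StrictMonoOn h (Set.Icc a b) := by
    apply strictMonoOn_of_deriv_pos (convex_Icc a b)
    · exact fun s _ => (hd1 s).continuousAt.continuousWithinAt
    · intro s hs
      rw [interior_Icc] at hs
      rw [(hd1 s).deriv]
      apply hball
      · rw [Real.dist_eq, abs_of_pos (sub_pos.2 hs.1)]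
        have h3 : s - a < min δ δ' / 2 := by
          have := hs.2; rw [hb] at this; linarith
        have := min_le_left δ δ'
        linarith
      · exact hs.1
  have hcon : h a < h b := hmono (Set.left_mem_Icc.2 hab.le) (Set.right_mem_Icc.2 hab.le) hab
  have hle : h b ≤ h a := by
    apply hball'
    rw [Real.dist_eq, abs_of_pos (sub_pos.2 hab), hba]
    have := min_le_right δ δ'
    linarith
  linarith

lemma aux_deriv_nonneg_at_max {φ : ℝ → ℝ} {φ' T t : ℝ}
    (ht : 0 < t) (htT : t ≤ T)
    (hmax : IsMaxOn φ (Set.Icc 0 T) t) (hder : HasDerivAt φ φ' t) : 0 ≤ φ' := by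
  have hloc : IsLocalMaxOn φ (Set.Icc 0 T) t :=
    hmax.filter_mono inf_le_right
  have hseg : segment ℝ t 0 ⊆ Set.Icc 0 T := by
    apply (convex_Icc (0:ℝ) T).segment_subset
    · exact ⟨ht.le, htT⟩
    · exact ⟨le_refl 0, le_trans ht.le htT⟩
  have hcone : (0:ℝ) - t ∈ posTangentConeAt (Set.Icc 0 T) t :=
    sub_mem_posTangentConeAt_of_segment_subset hseg
  have := hloc.hasFDerivWithinAt_nonpos hder.hasFDerivAt.hasFDerivWithinAt hcone
  simp only [ContinuousLinearMap.toSpanSingleton_apply] at this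
  have h2 : (0 - t) * φ' ≤ 0 := by simpa [smul_eq_mul] using this
  nlinarith

lemma hasFDerivAt_fderiv_apply {d : ℕ} {g : Euc d → ℝ} (hg : ContDiff ℝ 2 g)
    (x : Euc d) (v : Euc d) :
    HasFDerivAt (fun y => fderiv ℝ g y v) ((fderiv ℝ (fderiv ℝ g) x).flip v) x := by
  have h1 : ContDiff ℝ 1 (fderiv ℝ g) := hg.fderiv_right (by norm_num)
  have hdg : HasFDerivAt (fderiv ℝ g) (fderiv ℝ (fderiv ℝ g) x) x :=
    (h1.differentiable (by norm_num) x).hasFDerivAt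
  have := hdg.clm_apply (hasFDerivAt_const v x)
  simpa using this

lemma lapl_eq {d : ℕ} {g : Euc d → ℝ} (hg : ContDiff ℝ 2 g) (x : Euc d) :
    lapl d g x = ∑ i : Fin d,
      fderiv ℝ (fderiv ℝ g) x (EuclideanSpace.single i (1:ℝ)) (EuclideanSpace.single i (1:ℝ)) := by
  unfold lapl
  congr 1
  ext i
  rw [(hasFDerivAt_fderiv_apply hg x (EuclideanSpace.single i (1:ℝ))).fderiv]
  rfl

lemma hasFDerivAt_coord (d : ℕ) (i : Fin d) (y : Euc d) :
    HasFDerivAt (fun w : Euc d => w i) (EuclideanSpace.proj (𝕜 := ℝ) i) y :=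
  ((EuclideanSpace.proj (𝕜 := ℝ) i).hasFDerivAt (x := y)).congr_of_eventuallyEq
    (Filter.Eventually.of_forall fun w => by simp)

lemma spatial_lapl_bound {d : ℕ} (hd : 0 < d) {g h : Euc d → ℝ}
    (hg : ContDiff ℝ 2 g) (hh : ContDiff ℝ 2 h)
    (β ε A b C : ℝ) (x₀ : Euc d)
    (hmax : IsLocalMax (fun y : Euc d =>
      (g y - h y - A * Real.exp (b * y ⟨0, hd⟩)) * β - ε * (C + ∑ i, y i * y i)) x₀) :
    (lapl d g x₀ - lapl d h x₀ - A * b^2 * Real.exp (b * x₀ ⟨0, hd⟩)) * β - ε * (2*d) ≤ 0 := by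
  set i0 : Fin d := ⟨0, hd⟩ with hi0
  set e : Fin d → Euc d := fun i => EuclideanSpace.single i (1:ℝ) with he
  set pr : Fin d → (Euc d →L[ℝ] ℝ) := fun i => EuclideanSpace.proj i with hpr
  set G : Euc d → ℝ := fun y =>
      (g y - h y - A * Real.exp (b * y i0)) * β - ε * (C + ∑ i, y i * y i) with hGdef
  have hgd : Differentiable ℝ g := hg.differentiable (by norm_num)
  have hhd : Differentiable ℝ h := hh.differentiable (by norm_num)
  -- first derivative of G everywhere
  set Φ : Euc d → (Euc d →L[ℝ] ℝ) := fun y =>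
    β • ((fderiv ℝ g y - fderiv ℝ h y) -
      A • (Real.exp (b * y i0) • (b • pr i0))) -
      ε • (∑ i, (y i • pr i + y i • pr i)) with hΦ
  have hGder : ∀ y, HasFDerivAt G (Φ y) y := by
    intro y
    have hexp : HasFDerivAt (fun w : Euc d => A * Real.exp (b * w i0))
        (A • (Real.exp (b * y i0) • (b • pr i0))) y :=
      (((hasFDerivAt_coord d i0 y).const_mul b).exp).const_mul A
    have hquad : HasFDerivAt (fun w : Euc d => C + ∑ i, w i * w i)
        (∑ i, (y i • pr i + y i • pr i)) y := by
      apply HasFDerivAt.const_add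
      apply HasFDerivAt.fun_sum
      intro i _
      exact (hasFDerivAt_coord d i y).mul (hasFDerivAt_coord d i y)
    exact ((((hgd y).hasFDerivAt.sub (hhd y).hasFDerivAt).sub hexp).mul_const β).sub
      (hquad.const_mul ε)
  -- clean formula for Φ y (e i)
  set δ : Fin d → ℝ := fun i => if i0 = i then (1:ℝ) else 0 with hδ
  set ψ : Fin d → Euc d → ℝ := fun i y =>
    β * (fderiv ℝ g y (e i) - fderiv ℝ h y (e i) - A * b * δ i * Real.exp (b * y i0))
      - ε * (2 * y i) with hψdef
  have hproje : ∀ j i : Fin d, pr j (e i) = if j = i then (1:ℝ) else 0 := by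
    intro j i
    simp [hpr, he, EuclideanSpace.single_apply]
  have hψ : ∀ i y, Φ y (e i) = ψ i y := by
    intro i y
    simp only [hΦ, hψdef, ContinuousLinearMap.sub_apply, ContinuousLinearMap.smul_apply,
      ContinuousLinearMap.sum_apply, ContinuousLinearMap.add_apply, smul_eq_mul, hproje]
    have h1 : ∀ j : Fin d, (y j * (if j = i then (1:ℝ) else 0) + y j * (if j = i then (1:ℝ) else 0))
        = if j = i then 2 * y j else 0 := by
      intro j; split_ifs <;> ring
    rw [Finset.sum_congr rfl (fun j _ => h1 j),
      Finset.sum_ite_eq' Finset.univ i (fun j => 2 * y j), if_pos (Finset.mem_univ i)]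
    by_cases hii : i0 = i
    · simp only [hδ, if_pos hii]; ring
    · simp only [hδ, if_neg hii]; ring
  -- second derivative of ψ i at x₀
  set Ψ : Fin d → (Euc d →L[ℝ] ℝ) := fun i =>
    β • (((fderiv ℝ (fderiv ℝ g) x₀).flip (e i) - (fderiv ℝ (fderiv ℝ h) x₀).flip (e i)) -
      (A * b * δ i) • (Real.exp (b * x₀ i0) • (b • pr i0))) - ε • ((2:ℝ) • pr i) with hΨ
  have hψder : ∀ i, HasFDerivAt (ψ i) (Ψ i) x₀ := by
    intro i
    have hexp : HasFDerivAt (fun w : Euc d => A * b * δ i * Real.exp (b * w i0))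
        ((A * b * δ i) • (Real.exp (b * x₀ i0) • (b • pr i0))) x₀ :=
      (((hasFDerivAt_coord d i0 x₀).const_mul b).exp).const_mul (A * b * δ i)
    have hlin : HasFDerivAt (fun w : Euc d => 2 * w i) ((2:ℝ) • pr i) x₀ :=
      (hasFDerivAt_coord d i x₀).const_mul 2
    exact ((((hasFDerivAt_fderiv_apply hg x₀ (e i)).sub
      (hasFDerivAt_fderiv_apply hh x₀ (e i))).sub hexp).const_mul β).sub (hlin.const_mul ε)
  -- one-dimensional restriction: Ψ i (e i) ≤ 0
  have hkey : ∀ i : Fin d, Ψ i (e i) ≤ 0 := by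
    intro i
    have hline : ∀ s : ℝ, HasDerivAt (fun s : ℝ => x₀ + s • e i) (e i) s := by
      intro s
      simpa using ((hasDerivAt_id s).smul_const (e i)).const_add x₀
    have hd1 : ∀ s : ℝ, HasDerivAt (fun s : ℝ => G (x₀ + s • e i)) (ψ i (x₀ + s • e i)) s := by
      intro s
      have := (hGder (x₀ + s • e i)).comp_hasDerivAt s (hline s)
      rw [hψ] at this
      exact this
    have hd2 : HasDerivAt (fun s : ℝ => ψ i (x₀ + s • e i)) (Ψ i (e i)) 0 := by
      have h0 : HasFDerivAt (ψ i) (Ψ i) (x₀ + (0:ℝ) • e i) := by simpa using hψder i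
      exact h0.comp_hasDerivAt 0 (hline 0)
    have hlm : IsLocalMax (fun s : ℝ => G (x₀ + s • e i)) 0 := by
      have hcontf : Continuous (fun s : ℝ => x₀ + s • e i) :=
        continuous_const.add (continuous_id.smul continuous_const)
      have hcont : Filter.Tendsto (fun s : ℝ => x₀ + s • e i) (nhds 0) (nhds x₀) := by
        have := hcontf.tendsto 0
        simpa using this
      have hev := hcont.eventually hmax
      filter_upwards [hev] with s hs
      simpa using hs
    exact aux_second_deriv_nonpos hd1 hd2 hlm
  -- sum up
  have hval : ∀ i : Fin d, Ψ i (e i) =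
      β * (fderiv ℝ (fderiv ℝ g) x₀ (e i) (e i) - fderiv ℝ (fderiv ℝ h) x₀ (e i) (e i))
        - (β * A * b^2 * Real.exp (b * x₀ i0)) * δ i - ε * 2 := by
    intro i
    simp only [hΨ, ContinuousLinearMap.sub_apply, ContinuousLinearMap.smul_apply,
      ContinuousLinearMap.flip_apply, smul_eq_mul, hproje, if_pos rfl]
    by_cases hii : i0 = i
    · simp only [hδ, if_pos hii, eq_self_iff_true, if_true]; ring
    · simp only [hδ, if_neg hii, eq_self_iff_true, if_true]; ring
  have hsum : ∑ i, Ψ i (e i) =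
      (lapl d g x₀ - lapl d h x₀ - A * b^2 * Real.exp (b * x₀ i0)) * β - ε * (2*d) := by
    rw [Finset.sum_congr rfl (fun i _ => hval i)]
    rw [Finset.sum_sub_distrib, Finset.sum_sub_distrib, ← Finset.mul_sum,
      Finset.sum_sub_distrib, ← Finset.mul_sum, Finset.sum_const, Finset.card_univ,
      Fintype.card_fin, nsmul_eq_mul]
    have hδsum : ∑ i : Fin d, δ i = 1 := by
      simp only [hδ]
      rw [Finset.sum_ite_eq Finset.univ i0 (fun _ => (1:ℝ))]
      simp
    rw [hδsum, lapl_eq hg, lapl_eq hh]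
    push_cast
    ring
  have hfin : ∑ i, Ψ i (e i) ≤ 0 := Finset.sum_nonpos (fun i _ => hkey i)
  rw [hsum] at hfin
  exact hfin

set_option maxHeartbeats 2000000 in
/-- Lemma 9.1: with `p ∈ (0,1)` an equilibrium of `Δp + f₀(p) = 0`, `f = f₀` above `p`,
and `c = max{2√L, 1}`, any `[0,1]`-valued solution with
`u(0,x) ≤ p(x) + e^{-c(x₁-z)/2}` satisfies `u(t,x) ≤ p(x) + e^{-c(x₁-z-ct)/2}`. -/
theorem statement_19
    (d : ℕ) (hd : 0 < d) (θ₀ : ℝ) (hθ₀ : θ₀ ∈ Set.Ioo (0:ℝ) 1)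
    (L : ℝ≥0) (f₀ : ℝ → ℝ) (hf₀lip : LipschitzWith L f₀)
    (hf₀nn : ∀ v, 0 ≤ f₀ v) (hf₀z : ∀ v, v ∉ Set.Ioo θ₀ 1 → f₀ v = 0)
    (p : Euc d → ℝ) (hp2 : ContDiff ℝ 2 p) (hpr : ∀ x, p x ∈ Set.Ioo (0:ℝ) 1)
    (hpeq : ∀ x, lapl d p x + f₀ (p x) = 0)
    (f : Euc d → ℝ → ℝ)
    (hfl : ∃ K : ℝ≥0, LipschitzWith K (fun q : Euc d × ℝ => f q.1 q.2))
    (hfnn : ∀ x v, 0 ≤ f x v)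
    (hfp : ∀ x v, p x ≤ v → f x v = f₀ v)
    (c : ℝ) (hc : c = max (2 * Real.sqrt (L:ℝ)) 1)
    (z : ℝ) (u₀ : Euc d → ℝ) (u : ℝ → Euc d → ℝ)
    (hu : ∀ t x, u t x ∈ Set.Icc (0:ℝ) 1) (husol : IsSolC f 0 u₀ u)
    (hu₀ : ∀ x : Euc d, u₀ x ≤ p x + Real.exp (-c * (x ⟨0, hd⟩ - z) / 2)) :
    ∀ t, 0 < t → ∀ x : Euc d,
      u t x ≤ p x + Real.exp (-c * (x ⟨0, hd⟩ - z - c * t) / 2) := by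
  intro t ht x
  set i0 : Fin d := ⟨0, hd⟩ with hi0
  -- basic facts about c
  have hc1 : 1 ≤ c := hc ▸ le_max_right _ _
  have hcpos : 0 < c := lt_of_lt_of_le one_pos hc1
  have hL4 : (L:ℝ) ≤ c^2/4 := by
    have h1 : 2 * Real.sqrt (L:ℝ) ≤ c := hc ▸ le_max_left _ _
    have h2 : 0 ≤ 2 * Real.sqrt (L:ℝ) := by positivity
    have h3 : (2 * Real.sqrt (L:ℝ))^2 ≤ c^2 := by nlinarith
    have h4 : Real.sqrt (L:ℝ)^2 = (L:ℝ) := Real.sq_sqrt L.coe_nonneg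
    nlinarith
  set bb : ℝ := -c/2 with hbb
  set AA : ℝ → ℝ := fun s => Real.exp (c*z/2 + (c*c/2)*s) with hAA
  have hAexp : ∀ s (y : Euc d), AA s * Real.exp (bb * y i0)
      = Real.exp (-c * (y i0 - z - c * s) / 2) := by
    intro s y
    rw [hAA, hbb, ← Real.exp_add]
    congr 1
    ring
  -- the key claim, for each ε > 0
  have claim : ∀ ε : ℝ, 0 < ε →
      (u t x - p x - AA t * Real.exp (bb * x i0)) * Real.exp (-(L:ℝ)*t)
        ≤ ε * ((2*(d:ℝ)+1)*t + ∑ i, x i * x i) := by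
    intro ε hε
    by_contra hcon
    push_neg at hcon
    set Z : ℝ → Euc d → ℝ := fun s y =>
      (u s y - p y - AA s * Real.exp (bb * y i0)) * Real.exp (-(L:ℝ)*s)
        - ε * ((2*(d:ℝ)+1)*s + ∑ i, y i * y i) with hZ
    have hZtx : 0 < Z t x := by rw [hZ]; dsimp only; linarith
    -- choice of radius
    set R : ℝ := ‖x‖ + Real.sqrt (1/ε) + 1 with hR
    have hsq : 0 ≤ Real.sqrt (1/ε) := Real.sqrt_nonneg _
    have hRx : ‖x‖ ≤ R := by rw [hR]; linarith
    have hR0 : 0 < R := by rw [hR]; positivity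
    have hR1 : 1 ≤ ε * R^2 := by
      have h1 : Real.sqrt (1/ε) ^ 2 = 1/ε := Real.sq_sqrt (by positivity)
      have h2 : Real.sqrt (1/ε) ≤ R := by rw [hR]; linarith [norm_nonneg x]
      have h3 : Real.sqrt (1/ε)^2 ≤ R^2 := by nlinarith
      rw [h1] at h3
      calc (1:ℝ) = ε * (1/ε) := by field_simp
        _ ≤ ε * R^2 := by nlinarith
    -- norms and sums of squares
    have hQ : ∀ y : Euc d, ∑ i, y i * y i = ‖y‖^2 := by
      intro y
      rw [EuclideanSpace.norm_eq, Real.sq_sqrt (by positivity)]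
      congr 1
      ext i
      rw [Real.norm_eq_abs, sq_abs]
      ring
    have hQnn : ∀ y : Euc d, 0 ≤ ∑ i, y i * y i := by
      intro y; rw [hQ]; positivity
    -- compact set
    set K : Set (ℝ × Euc d) := Set.Icc 0 t ×ˢ Metric.closedBall (0:Euc d) R with hK
    have hKc : IsCompact K := isCompact_Icc.prod (isCompact_closedBall _ _)
    have hKne : K.Nonempty := ⟨(0, 0), by
      refine ⟨⟨le_refl 0, ht.le⟩, ?_⟩
      simp [hR0.le]⟩
    have hmemK : ∀ s y, 0 ≤ s → s ≤ t → ‖y‖ ≤ R → (s, y) ∈ K := by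
      intro s y h1 h2 h3
      refine ⟨⟨h1, h2⟩, ?_⟩
      rw [Metric.mem_closedBall, dist_zero_right]
      exact h3
    -- continuity of Z on K
    have hZcont : ContinuousOn (fun q : ℝ × Euc d => Z q.1 q.2) K := by
      have hucont : ContinuousOn (fun q : ℝ × Euc d => u q.1 q.2) K := by
        apply husol.2.2.mono
        intro q hq
        exact ⟨hq.1.1, trivial⟩
      have hcoordc : Continuous (fun q : ℝ × Euc d => q.2 i0) :=
        (EuclideanSpace.proj (𝕜 := ℝ) i0).continuous.comp continuous_snd
      have hEc : Continuous (fun q : ℝ × Euc d => AA q.1 * Real.exp (bb * q.2 i0)) := by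
        apply Continuous.mul
        · exact Real.continuous_exp.comp (continuous_const.add (continuous_const.mul continuous_fst))
        · exact Real.continuous_exp.comp (continuous_const.mul hcoordc)
      have hQc : Continuous (fun q : ℝ × Euc d => ∑ i, q.2 i * q.2 i) := by
        apply continuous_finset_sum
        intro i _
        have : Continuous (fun q : ℝ × Euc d => q.2 i) :=
          (EuclideanSpace.proj (𝕜 := ℝ) i).continuous.comp continuous_snd
        exact this.mul this
      apply ContinuousOn.sub
      · apply ContinuousOn.mul
        · exact ((hucont.sub ((hp2.continuous.comp continuous_snd).continuousOn)).sub
            hEc.continuousOn)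
        · exact (Real.continuous_exp.comp (continuous_const.mul continuous_fst)).continuousOn
      · exact (continuous_const.mul ((continuous_const.mul continuous_fst).add hQc)).continuousOn
    -- maximum point
    obtain ⟨q0, hq0K, hq0max⟩ := hKc.exists_isMaxOn hKne hZcont
    set t0 : ℝ := q0.1 with ht0
    set x0 : Euc d := q0.2 with hx0
    have hq0eq : q0 = (t0, x0) := rfl
    have ht0mem : t0 ∈ Set.Icc 0 t := hq0K.1
    have hx0mem : ‖x0‖ ≤ R := by
      have := hq0K.2
      rwa [Metric.mem_closedBall, dist_zero_right] at this
    have hmax0 : 0 < Z t0 x0 := by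
      have := hq0max (hmemK t x ht.le le_rfl hRx)
      exact lt_of_lt_of_le hZtx this
    -- Z is nonpositive outside the ball of radius R
    have hZout : ∀ s (y : Euc d), 0 ≤ s → R ≤ ‖y‖ → Z s y ≤ 0 := by
      intro s y hs hy
      have hw1 : u s y - p y - AA s * Real.exp (bb * y i0) ≤ 1 := by
        have h1 := (hu s y).2
        have h2 := (hpr y).1
        have h3 : 0 < AA s * Real.exp (bb * y i0) := by positivity
        linarith
      have hβ1 : Real.exp (-(L:ℝ)*s) ≤ 1 := by
        rw [Real.exp_le_one_iff]
        have := L.coe_nonneg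
        nlinarith
      have hβ0 : 0 < Real.exp (-(L:ℝ)*s) := Real.exp_pos _
      have hfirst : (u s y - p y - AA s * Real.exp (bb * y i0)) * Real.exp (-(L:ℝ)*s) ≤ 1 := by
        nlinarith
      have hsecond : 1 ≤ ε * ((2*(d:ℝ)+1)*s + ∑ i, y i * y i) := by
        have h1 : R^2 ≤ ‖y‖^2 := by nlinarith [norm_nonneg y]
        have h2 : ε * R^2 ≤ ε * ‖y‖^2 := by nlinarith
        have h3 : 0 ≤ (2*(d:ℝ)+1)*s := by positivity
        rw [hQ y]
        nlinarith
      rw [hZ]; dsimp only; linarith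
    -- hence the max point is in the interior in space
    have hx0R : ‖x0‖ < R := by
      rcases lt_or_ge (‖x0‖) R with h | h
      · exact h
      · exact absurd (hZout t0 x0 ht0mem.1 h) (by linarith)
    -- and at a positive time
    have ht0pos : 0 < t0 := by
      rcases lt_or_ge 0 t0 with h | h
      · exact h
      · exfalso
        have ht00 : t0 = 0 := le_antisymm h ht0mem.1
        have hinit : Z 0 x0 ≤ 0 := by
          have h1 : u 0 x0 = u₀ x0 := husol.2.1 x0
          have h2 := hu₀ x0
          have h3 : AA 0 * Real.exp (bb * x0 i0) = Real.exp (-c * (x0 i0 - z) / 2) := by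
            rw [hAexp 0 x0]
            congr 1
            ring
          have h4 : 0 ≤ ∑ i, x0 i * x0 i := hQnn x0
          rw [hZ]
          dsimp only
          rw [h1, h3]
          have h5 : Real.exp (-(L:ℝ)*0) = 1 := by norm_num
          rw [h5]
          nlinarith
        rw [ht00] at hmax0
        linarith
    have ht0t : t0 ≤ t := ht0mem.2
    -- the solution is above p at the max point
    set β : ℝ := Real.exp (-(L:ℝ)*t0) with hβ
    have hβpos : 0 < β := Real.exp_pos _
    set Estar : ℝ := AA t0 * Real.exp (bb * x0 i0) with hEstar
    have hEpos : 0 < Estar := by rw [hEstar]; positivity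
    set w : ℝ := u t0 x0 - p x0 - Estar with hw
    have hwpos : 0 < w := by
      have h1 : Z t0 x0 = w * β - ε * ((2*(d:ℝ)+1)*t0 + ∑ i, x0 i * x0 i) := rfl
      have h2 : 0 ≤ ε * ((2*(d:ℝ)+1)*t0 + ∑ i, x0 i * x0 i) := by
        have := hQnn x0
        have h3 : 0 ≤ (2*(d:ℝ)+1)*t0 := by positivity
        positivity
      rw [h1] at hmax0
      nlinarith
    -- spatial second-order information
    have hsp : (lapl d (u t0) x0 - lapl d p x0 - AA t0 * bb^2 * Real.exp (bb * x0 i0)) * β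
        - ε * (2*(d:ℝ)) ≤ 0 := by
      apply spatial_lapl_bound hd (husol.1.1 t0 ht0pos) hp2 β ε (AA t0) bb ((2*(d:ℝ)+1)*t0) x0
      have hball : 0 < R - ‖x0‖ := by linarith
      filter_upwards [Metric.ball_mem_nhds x0 hball] with y hy
      have hyR : ‖y‖ ≤ R := by
        have h1 : dist y x0 < R - ‖x0‖ := hy
        have h2 : ‖y‖ - ‖x0‖ ≤ ‖y - x0‖ := norm_sub_norm_le _ _
        rw [dist_eq_norm] at h1
        linarith
      exact hq0max (hmemK t0 y ht0mem.1 ht0t hyR)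
    -- time derivative information
    have htime : 0 ≤ ((lapl d (u t0) x0 + f x0 (u t0 x0)
          - Real.exp (c*z/2 + (c*c/2)*t0) * (c*c/2) * Real.exp (bb * x0 i0)) * β
          + (u t0 x0 - p x0 - AA t0 * Real.exp (bb * x0 i0)) * (β * (-(L:ℝ))))
          - ε * ((2*(d:ℝ)+1) * 1) := by
      have hU : HasDerivAt (fun s => u s x0) (lapl d (u t0) x0 + f x0 (u t0 x0)) t0 :=
        husol.1.2 x0 t0 ht0pos
      have hAAder : HasDerivAt AA (Real.exp (c*z/2 + (c*c/2)*t0) * (c*c/2)) t0 := by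
        have h1 : HasDerivAt (fun s : ℝ => c*z/2 + (c*c/2)*s) (c*c/2) t0 := by
          simpa using ((hasDerivAt_id t0).const_mul (c*c/2)).const_add (c*z/2)
        exact h1.exp
      have hE' : HasDerivAt (fun s => AA s * Real.exp (bb * x0 i0))
          (Real.exp (c*z/2 + (c*c/2)*t0) * (c*c/2) * Real.exp (bb * x0 i0)) t0 :=
        hAAder.mul_const _
      have hβder : HasDerivAt (fun s : ℝ => Real.exp (-(L:ℝ)*s)) (β * (-(L:ℝ))) t0 := by
        have h1 : HasDerivAt (fun s : ℝ => -(L:ℝ)*s) (-(L:ℝ)) t0 := by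
          simpa using (hasDerivAt_id t0).const_mul (-(L:ℝ))
        simpa [hβ] using h1.exp
      have hlin : HasDerivAt (fun s : ℝ => ε * ((2*(d:ℝ)+1)*s + ∑ i, x0 i * x0 i))
          (ε * ((2*(d:ℝ)+1) * 1)) t0 := by
        have h1 : HasDerivAt (fun s : ℝ => (2*(d:ℝ)+1)*s + ∑ i, x0 i * x0 i)
            ((2*(d:ℝ)+1) * 1) t0 := by
          simpa using (((hasDerivAt_id t0).const_mul (2*(d:ℝ)+1)).add_const (∑ i, x0 i * x0 i))
        exact h1.const_mul ε
      have hφ : HasDerivAt (fun s => Z s x0)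
          (((lapl d (u t0) x0 + f x0 (u t0 x0)
            - Real.exp (c*z/2 + (c*c/2)*t0) * (c*c/2) * Real.exp (bb * x0 i0)) * β
            + (u t0 x0 - p x0 - AA t0 * Real.exp (bb * x0 i0)) * (β * (-(L:ℝ))))
            - ε * ((2*(d:ℝ)+1) * 1)) t0 := by
        have := (((hU.sub_const (p x0)).sub hE').mul hβder).sub hlin
        exact this
      have hmaxt : IsMaxOn (fun s => Z s x0) (Set.Icc 0 t) t0 := by
        intro s hs
        exact hq0max (hmemK s x0 hs.1 hs.2 hx0mem)
      exact aux_deriv_nonneg_at_max ht0pos ht0t hmaxt hφ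
    -- reaction term identities
    have hupx : p x0 ≤ u t0 x0 := by rw [hw] at hwpos; nlinarith
    have hfeq : f x0 (u t0 x0) = f₀ (u t0 x0) := hfp x0 _ hupx
    have hlip : f₀ (u t0 x0) - f₀ (p x0) ≤ (L:ℝ) * (w + Estar) := by
      have h1 := hf₀lip.dist_le_mul (u t0 x0) (p x0)
      rw [Real.dist_eq, Real.dist_eq] at h1
      have h2 : |u t0 x0 - p x0| = w + Estar := by
        rw [abs_of_pos (by nlinarith)]
        rw [hw]; ring
      rw [h2] at h1
      calc f₀ (u t0 x0) - f₀ (p x0) ≤ |f₀ (u t0 x0) - f₀ (p x0)| := le_abs_self _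
        _ ≤ (L:ℝ) * (w + Estar) := h1
    have hpeq0 : lapl d p x0 = - f₀ (p x0) := by linarith [hpeq x0]
    -- final contradiction
    have hbb2 : AA t0 * bb^2 * Real.exp (bb * x0 i0) = (c^2/4) * Estar := by
      rw [hEstar, hbb]; ring
    have hDE : Real.exp (c*z/2 + (c*c/2)*t0) * (c*c/2) * Real.exp (bb * x0 i0)
        = (c^2/2) * Estar := by
      rw [hEstar, hAA]; ring
    rw [hbb2] at hsp
    rw [hfeq, hDE] at htime
    rw [hpeq0] at hsp
    -- htime : 0 ≤ (laplU + f₀u - (c²/2)E)β + w β (−L) − ε(2d+1)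
    -- hsp : (laplU + f₀p − (c²/4)E)β − 2dε ≤ 0
    have hEw : u t0 x0 - p x0 - AA t0 * Real.exp (bb * x0 i0) = w := rfl
    rw [hEw] at htime
    have hkey : (f₀ (u t0 x0) - f₀ (p x0) - (c^2/4) * Estar - (L:ℝ)*w) ≤
        ((L:ℝ) - c^2/4) * Estar := by nlinarith [hlip]
    have hkey2 : ((L:ℝ) - c^2/4) * Estar ≤ 0 :=
      mul_nonpos_of_nonpos_of_nonneg (by linarith) hEpos.le
    nlinarith [mul_le_mul_of_nonneg_right hkey hβpos.le,
      mul_le_mul_of_nonneg_right hkey2 hβpos.le]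
  -- let ε → 0
  have hCq : 0 ≤ (2*(d:ℝ)+1)*t + ∑ i, x i * x i := by
    have h1 : (0:ℝ) ≤ ∑ i, x i * x i := by
      apply Finset.sum_nonneg; intro i _; exact mul_self_nonneg _
    have h2 : 0 ≤ (2*(d:ℝ)+1)*t := by positivity
    linarith
  set a : ℝ := (u t x - p x - AA t * Real.exp (bb * x i0)) * Real.exp (-(L:ℝ)*t) with ha
  have hanp : a ≤ 0 := by
    by_contra hcona
    push_neg at hcona
    set Cq : ℝ := (2*(d:ℝ)+1)*t + ∑ i, x i * x i with hCqdef
    have hCq' : 0 ≤ Cq := hCq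
    have hden : (0:ℝ) < 2 * (Cq + 1) := by linarith
    have hclaim := claim (a / (2 * (Cq + 1))) (div_pos hcona hden)
    have h1 : a / (2 * (Cq + 1)) * Cq ≤ a / (2 * (Cq + 1)) * (Cq + 1) :=
      mul_le_mul_of_nonneg_left (by linarith) (le_of_lt (div_pos hcona hden))
    have h2 : a / (2 * (Cq + 1)) * (Cq + 1) = a / 2 := by
      field_simp
    linarith
  have hβt : 0 < Real.exp (-(L:ℝ)*t) := Real.exp_pos _
  have hfin : u t x - p x - AA t * Real.exp (bb * x i0) ≤ 0 := by
    rw [ha] at hanp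
    nlinarith
  rw [hAexp t x] at hfin
  linarith

end
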